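/- Let X₁ ∈ ℝ^{p₁}, X₂ ∈ ℝ^{p₂} be integrable random vectors with E(X₂ | X₁) = μ₂ + B X₁ a.s. for a fixed matrix B = Σ₂₁Σ₁₁⁻¹, and Cov(X₂ | X₁) = h(X₁)·S a.s. for a scalar function h ≥ 0 and fixed matrix S = Σ₂₂ - Σ₂₁Σ₁₁⁻¹Σ₁₂. Given an event E = {X₁ ∈ A₁} with positive probability, write Ω₁₁ = Cov(X₁ | E) and ω = E(h(X₁) | E). Then Cov(X₁, X₂ | E) = Ω₁₁ B^T and Cov(X₂ | E) = B Ω₁₁ B^T + ω S. -/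

import Mathlib

/-!
Write `X₂ = μ₂ + B X₁ + Y`. Given `X₁`, the residual `Y` has mean zero and second moments
`h(X₁) S`. The event `Ev` and every function of `X₁` are `σ(X₁)`-measurable, so by the pull-out
property `Y` is uncorrelated with `X₁` under `P[|Ev]` and its covariance there is
`E(h(X₁) | Ev) S`. Bilinearity of the covariance then expands the covariances of the affine
combination `μ₂ + B X₁ + Y`.
-/

open MeasureTheory ProbabilityTheory Matrix

namespace ProbabilityTheory

section CrossCovariance

variable {Ω ι κ : Type*} {mΩ : MeasurableSpace Ω} {Q : Measure Ω}

noncomputable def crossCovMatrix (X : Ω → ι → ℝ) (Y : Ω → κ → ℝ) (Q : Measure Ω) : Matrix ι κ ℝ :=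
  Matrix.of fun r j => cov[fun ω => X ω r, fun ω => Y ω j; Q]

lemma crossCovMatrix_apply (X : Ω → ι → ℝ) (Y : Ω → κ → ℝ) (r : ι) (j : κ) :
    crossCovMatrix X Y Q r j = cov[fun ω => X ω r, fun ω => Y ω j; Q] := rfl

variable [Fintype ι] {X : Ω → ι → ℝ} {Y : Ω → κ → ℝ}

lemma memLp_dotProduct {p : ENNReal} (hX : ∀ s, MemLp (fun ω => X ω s) p Q) (b : ι → ℝ) :
    MemLp (fun ω => b ⬝ᵥ X ω) p Q :=
  memLp_finsetSum _ fun s _ => (hX s).const_mul (b s)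

lemma memLp_const_add_mulVec_apply [IsFiniteMeasure Q] {p : ENNReal}
    (hX : ∀ s, MemLp (fun ω => X ω s) p Q) (c : κ → ℝ) (B : Matrix κ ι ℝ) (i : κ) :
    MemLp (fun ω => (c + B *ᵥ X ω) i) p Q :=
  (memLp_const (c i)).add (memLp_dotProduct hX (B i))

variable [IsProbabilityMeasure Q]

lemma covariance_dotProduct_left (hX : ∀ s, MemLp (fun ω => X ω s) 2 Q) {W : Ω → ℝ}
    (hW : MemLp W 2 Q) (b : ι → ℝ) :
    cov[fun ω => b ⬝ᵥ X ω, W; Q] = ∑ s, b s * cov[fun ω => X ω s, W; Q] := by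
  simp only [dotProduct]
  rw [covariance_fun_sum_left (X := fun s ω => b s * X ω s) (fun s => (hX s).const_mul (b s)) hW]
  simp only [covariance_const_mul_left]

lemma covariance_affine_add_left (hX : ∀ s, MemLp (fun ω => X ω s) 2 Q)
    (hY : ∀ j, MemLp (fun ω => Y ω j) 2 Q) {W : Ω → ℝ} (hW : MemLp W 2 Q)
    (c : κ → ℝ) (B : Matrix κ ι ℝ) (i : κ) :
    cov[fun ω => (c + B *ᵥ X ω + Y ω) i, W; Q]
      = ∑ s, B i s * cov[fun ω => X ω s, W; Q] + cov[fun ω => Y ω i, W; Q] := by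
  calc cov[fun ω => (c + B *ᵥ X ω + Y ω) i, W; Q]
      = cov[(fun ω => (c + B *ᵥ X ω) i) + fun ω => Y ω i, W; Q] := rfl
    _ = cov[fun ω => (c + B *ᵥ X ω) i, W; Q] + cov[fun ω => Y ω i, W; Q] :=
        covariance_add_left (memLp_const_add_mulVec_apply hX c B i) (hY i) hW
    _ = cov[fun ω => B i ⬝ᵥ X ω, W; Q] + cov[fun ω => Y ω i, W; Q] := by
        congr 1
        exact covariance_const_add_left ((memLp_dotProduct hX (B i)).integrable one_le_two) (c i)
    _ = _ := by rw [covariance_dotProduct_left hX hW]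

lemma crossCovMatrix_affine_add_right (hX : ∀ s, MemLp (fun ω => X ω s) 2 Q)
    (hY : ∀ j, MemLp (fun ω => Y ω j) 2 Q) (hXY : crossCovMatrix X Y Q = 0)
    (c : κ → ℝ) (B : Matrix κ ι ℝ) :
    crossCovMatrix X (fun ω => c + B *ᵥ X ω + Y ω) Q = crossCovMatrix X X Q * Bᵀ := by
  ext r j
  have hXY' : cov[fun ω => X ω r, fun ω => Y ω j; Q] = 0 := congrFun (congrFun hXY r) j
  rw [crossCovMatrix_apply, covariance_comm, covariance_affine_add_left hX hY (hX r),
    covariance_comm (fun ω => Y ω j), hXY', add_zero, mul_apply]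
  exact Finset.sum_congr rfl fun s _ => by rw [covariance_comm, mul_comm]; rfl

lemma crossCovMatrix_affine_add (hX : ∀ s, MemLp (fun ω => X ω s) 2 Q)
    (hY : ∀ j, MemLp (fun ω => Y ω j) 2 Q) (hXY : crossCovMatrix X Y Q = 0)
    (c : κ → ℝ) (B : Matrix κ ι ℝ) :
    crossCovMatrix (fun ω => c + B *ᵥ X ω + Y ω) (fun ω => c + B *ᵥ X ω + Y ω) Q
      = B * crossCovMatrix X X Q * Bᵀ + crossCovMatrix Y Y Q := by
  ext i j
  have hZ : MemLp (fun ω => (c + B *ᵥ X ω + Y ω) j) 2 Q :=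
    (memLp_const_add_mulVec_apply hX c B j).add (hY j)
  have hXZ (s : ι) : cov[fun ω => X ω s, fun ω => (c + B *ᵥ X ω + Y ω) j; Q]
      = (crossCovMatrix X X Q * Bᵀ) s j :=
    congrFun (congrFun (crossCovMatrix_affine_add_right hX hY hXY c B) s) j
  have hYZ : cov[fun ω => Y ω i, fun ω => (c + B *ᵥ X ω + Y ω) j; Q]
      = cov[fun ω => Y ω i, fun ω => Y ω j; Q] := by
    rw [covariance_comm, covariance_affine_add_left hX hY (hY i), covariance_comm (fun ω => Y ω j)]
    have hXY' (s : ι) : cov[fun ω => X ω s, fun ω => Y ω i; Q] = 0 := congrFun (congrFun hXY s) i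
    simp only [hXY', mul_zero, Finset.sum_const_zero, zero_add]
  rw [crossCovMatrix_apply, Matrix.add_apply, crossCovMatrix_apply Y,
    covariance_affine_add_left hX hY hZ, hYZ, Matrix.mul_assoc, mul_apply]
  simp only [hXZ]

end CrossCovariance

section Conditioning

variable {Ω : Type*} {m m₀ : MeasurableSpace Ω} {P : Measure[m₀] Ω} {s : Set Ω}

lemma integral_cond_eq_inv_mul_setIntegral (f : Ω → ℝ) :
    ∫ ω, f ω ∂P[|s] = (P s).toReal⁻¹ * ∫ ω in s, f ω ∂P := by
  rw [cond, integral_smul_measure, ENNReal.toReal_inv, smul_eq_mul]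

lemma _root_.MeasureTheory.MemLp.cond {p : ENNReal} {f : Ω → ℝ} (hf : MemLp f p P)
    (hs : P s ≠ 0) : MemLp f p P[|s] :=
  (hf.restrict s).smul_measure (ENNReal.inv_ne_top.2 hs)

lemma memLp_two_of_integrable_mul_self {f : Ω → ℝ} (hf : AEStronglyMeasurable f P)
    (hff : Integrable (fun ω => f ω * f ω) P) : MemLp f 2 P :=
  (memLp_two_iff_integrable_sq hf).2 (by simpa only [sq] using hff)

lemma covariance_cond_eq_sub [IsFiniteMeasure P] {f g : Ω → ℝ} (hf : MemLp f 2 P)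
    (hg : MemLp g 2 P) (hs : P s ≠ 0) :
    cov[f, g; P[|s]] = (P s).toReal⁻¹ * ∫ ω in s, f ω * g ω ∂P
      - ((P s).toReal⁻¹ * ∫ ω in s, f ω ∂P) * ((P s).toReal⁻¹ * ∫ ω in s, g ω ∂P) := by
  have := cond_isProbabilityMeasure (μ := P) hs
  rw [covariance_eq_sub (hf.cond hs) (hg.cond hs)]
  simp only [← integral_cond_eq_inv_mul_setIntegral]
  rfl

lemma condExp_apply_ae_eq {ι : Type*} [Fintype ι] {X : Ω → ι → ℝ} (hX : Integrable X P)
    (i : ι) : P[fun ω => X ω i|m] =ᵐ[P] fun ω => P[X|m] ω i :=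
  ((ContinuousLinearMap.proj (R := ℝ) (φ := fun _ : ι => ℝ) i).comp_condExp_comm hX).symm

lemma condExp_sub_ae_eq_zero (hm : m ≤ m₀) [SigmaFinite (P.trim hm)] {f g : Ω → ℝ}
    (hf : Integrable f P) (hgm : StronglyMeasurable[m] g) (hg : Integrable g P)
    (hfg : P[f|m] =ᵐ[P] g) : P[fun ω => f ω - g ω|m] =ᵐ[P] 0 := by
  filter_upwards [condExp_sub hf hg m, hfg] with ω hsub hω
  rw [show (fun ω => f ω - g ω) = f - g from rfl, hsub, Pi.sub_apply, hω,
    condExp_of_stronglyMeasurable hm hgm hg, sub_self, Pi.zero_apply]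

lemma condExp_sub_const_add_mulVec_ae_eq_zero (hm : m ≤ m₀) [IsFiniteMeasure P]
    {ι κ : Type*} [Fintype ι] [Fintype κ] {X : Ω → ι → ℝ} {Z : Ω → κ → ℝ} (hXm : Measurable[m] X)
    (hX : Integrable X P) (hZ : Integrable Z P) {c : κ → ℝ} {B : Matrix κ ι ℝ}
    (hZX : P[Z|m] =ᵐ[P] fun ω => c + B *ᵥ X ω) (j : κ) :
    P[fun ω => Z ω j - (c + B *ᵥ X ω) j|m] =ᵐ[P] 0 := by
  have hmean : MemLp (fun ω => (c + B *ᵥ X ω) j) 1 P :=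
    memLp_const_add_mulVec_apply (fun r => memLp_one_iff_integrable.2 (integrable_pi_iff.1 hX r))
      c B j
  have hmeanm : StronglyMeasurable[m] fun ω => (c + B *ᵥ X ω) j :=
    ((by fun_prop : Measurable fun x : ι → ℝ => (c + B *ᵥ x) j).comp hXm).stronglyMeasurable
  exact condExp_sub_ae_eq_zero hm (integrable_pi_iff.1 hZ j) hmeanm (hmean.integrable le_rfl)
    ((condExp_apply_ae_eq hZ j).trans (hZX.fun_comp (· j)))

lemma integral_cond_eq_of_condExp_ae_eq (hm : m ≤ m₀) [SigmaFinite (P.trim hm)] {F G : Ω → ℝ}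
    (hF : Integrable F P) (hFG : P[F|m] =ᵐ[P] G) (hs : MeasurableSet[m] s) :
    ∫ ω, F ω ∂P[|s] = ∫ ω, G ω ∂P[|s] := by
  rw [integral_cond_eq_inv_mul_setIntegral, integral_cond_eq_inv_mul_setIntegral,
    ← setIntegral_condExp hm hF hs, integral_congr_ae (ae_restrict_of_ae hFG)]

lemma integral_cond_eq_zero_of_condExp_ae_eq_zero (hm : m ≤ m₀) [SigmaFinite (P.trim hm)]
    {Z : Ω → ℝ} (hZ : Integrable Z P) (hZm : P[Z|m] =ᵐ[P] 0) (hs : MeasurableSet[m] s) :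
    ∫ ω, Z ω ∂P[|s] = 0 := by
  simpa using integral_cond_eq_of_condExp_ae_eq hm hZ hZm hs

lemma integral_cond_mul_eq_zero_of_condExp_ae_eq_zero (hm : m ≤ m₀) [SigmaFinite (P.trim hm)]
    {φ Z : Ω → ℝ} (hφ : StronglyMeasurable[m] φ) (hφZ : Integrable (φ * Z) P)
    (hZ : Integrable Z P) (hZm : P[Z|m] =ᵐ[P] 0) (hs : MeasurableSet[m] s) :
    ∫ ω, φ ω * Z ω ∂P[|s] = 0 := by
  have hpull : P[φ * Z|m] =ᵐ[P] 0 := by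
    filter_upwards [condExp_mul_of_stronglyMeasurable_left hφ hφZ hZ, hZm] with ω h1 h2
    rw [h1, Pi.mul_apply, h2, Pi.zero_apply, mul_zero]
  exact integral_cond_eq_zero_of_condExp_ae_eq_zero hm hφZ hpull hs

lemma covariance_cond_eq_zero_of_condExp_ae_eq_zero [IsFiniteMeasure P] (hm : m ≤ m₀)
    {φ Z : Ω → ℝ} (hφm : StronglyMeasurable[m] φ) (hφ : MemLp φ 2 P) (hZ : MemLp Z 2 P)
    (hZm : P[Z|m] =ᵐ[P] 0) (hs : MeasurableSet[m] s) (hPs : P s ≠ 0) :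
    cov[φ, Z; P[|s]] = 0 := by
  have := cond_isProbabilityMeasure (μ := P) hPs
  have hZint := hZ.integrable one_le_two
  have hφZ := integral_cond_mul_eq_zero_of_condExp_ae_eq_zero hm hφm (hφ.integrable_mul hZ)
    hZint hZm hs
  rw [covariance_eq_sub (hφ.cond hPs) (hZ.cond hPs)]
  simp only [Pi.mul_apply, hφZ, integral_cond_eq_zero_of_condExp_ae_eq_zero hm hZint hZm hs,
    mul_zero, sub_zero]

lemma covariance_cond_eq_integral_of_condExp [IsFiniteMeasure P] (hm : m ≤ m₀)
    {Z Z' ψ : Ω → ℝ} (hZ : MemLp Z 2 P) (hZ' : MemLp Z' 2 P) (hZm : P[Z|m] =ᵐ[P] 0)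
    (hψ : P[fun ω => Z ω * Z' ω|m] =ᵐ[P] ψ) (hs : MeasurableSet[m] s) (hPs : P s ≠ 0) :
    cov[Z, Z'; P[|s]] = ∫ ω, ψ ω ∂P[|s] := by
  have := cond_isProbabilityMeasure (μ := P) hPs
  rw [covariance_eq_sub (hZ.cond hPs) (hZ'.cond hPs),
    integral_cond_eq_zero_of_condExp_ae_eq_zero hm (hZ.integrable one_le_two) hZm hs, zero_mul,
    sub_zero]
  exact integral_cond_eq_of_condExp_ae_eq hm (hZ.integrable_mul hZ') hψ hs

end Conditioning

theorem crossCovMatrix_cond_of_condExp_eq_affine {Ω ι κ : Type*} [Fintype ι] [Fintype κ]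
    {m m₀ : MeasurableSpace Ω} {P : Measure[m₀] Ω} [IsFiniteMeasure P] (hm : m ≤ m₀)
    {X : Ω → ι → ℝ} {Z : Ω → κ → ℝ} (hXm : Measurable[m] X)
    (hX : ∀ r, MemLp (fun ω => X ω r) 2 P) (hZ : ∀ j, MemLp (fun ω => Z ω j) 2 P)
    {c : κ → ℝ} {B : Matrix κ ι ℝ} {S : Matrix κ κ ℝ} {v : Ω → ℝ}
    (hZX : P[Z|m] =ᵐ[P] fun ω => c + B *ᵥ X ω)
    (hcov : ∀ i j, P[fun ω => (Z ω i - (c + B *ᵥ X ω) i) * (Z ω j - (c + B *ᵥ X ω) j)|m]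
      =ᵐ[P] fun ω => v ω * S i j)
    {s : Set Ω} (hs : MeasurableSet[m] s) (hPs : P s ≠ 0) :
    crossCovMatrix X Z P[|s] = crossCovMatrix X X P[|s] * Bᵀ ∧
      crossCovMatrix Z Z P[|s] = B * crossCovMatrix X X P[|s] * Bᵀ + (∫ ω, v ω ∂P[|s]) • S := by
  have := cond_isProbabilityMeasure (μ := P) hPs
  set Y : Ω → κ → ℝ := fun ω j => Z ω j - (c + B *ᵥ X ω) j
  have hYL2 (j : κ) : MemLp (fun ω => Y ω j) 2 P :=
    (hZ j).sub (memLp_const_add_mulVec_apply hX c B j)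
  have hYm := condExp_sub_const_add_mulVec_ae_eq_zero hm hXm
    (integrable_pi_iff.2 fun r => (hX r).integrable one_le_two)
    (integrable_pi_iff.2 fun j => (hZ j).integrable one_le_two) hZX
  have hXY : crossCovMatrix X Y P[|s] = 0 := by
    ext r j
    exact covariance_cond_eq_zero_of_condExp_ae_eq_zero hm
      ((measurable_pi_apply r).comp hXm).stronglyMeasurable (hX r) (hYL2 j) (hYm j) hs hPs
  have hYY : crossCovMatrix Y Y P[|s] = (∫ ω, v ω ∂P[|s]) • S := by
    ext i j
    rw [crossCovMatrix_apply, covariance_cond_eq_integral_of_condExp hm (hYL2 i) (hYL2 j) (hYm i)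
      (hcov i j) hs hPs, integral_mul_const]
    rfl
  have hZY : Z = fun ω => c + B *ᵥ X ω + Y ω := by
    funext ω j
    simp [Y]
  have hXQ (r : ι) := (hX r).cond hPs
  have hYQ (j : κ) := (hYL2 j).cond hPs
  rw [hZY, crossCovMatrix_affine_add hXQ hYQ hXY, hYY]
  exact ⟨crossCovMatrix_affine_add_right hXQ hYQ hXY c B, rfl⟩

end ProbabilityTheory

theorem stmt_10_general {Ω : Type*} [m0 : MeasurableSpace Ω] (P : Measure Ω)
    [IsProbabilityMeasure P] {p₁ p₂ : ℕ}
    (X₁ : Ω → (Fin p₁ → ℝ)) (X₂ : Ω → (Fin p₂ → ℝ))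
    (hX₁ : Measurable X₁) (hX₂ : Measurable X₂)
    (hint₁₁ : ∀ r s, Integrable (fun ω => X₁ ω r * X₁ ω s) P)
    (hint₂₂ : ∀ i j, Integrable (fun ω => X₂ ω i * X₂ ω j) P)
    (μ₂ : Fin p₂ → ℝ) (B : Matrix (Fin p₂) (Fin p₁) ℝ)
    (Smat : Matrix (Fin p₂) (Fin p₂) ℝ)
    (h : (Fin p₁ → ℝ) → ℝ)
    (hcondmean : P[X₂ | MeasurableSpace.comap X₁ inferInstance]
        =ᵐ[P] fun ω => μ₂ + B *ᵥ X₁ ω)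
    (hcondcov : ∀ i j,
      P[(fun ω => (X₂ ω i - (μ₂ + B *ᵥ X₁ ω) i) * (X₂ ω j - (μ₂ + B *ᵥ X₁ ω) j)) |
          MeasurableSpace.comap X₁ inferInstance]
        =ᵐ[P] fun ω => h (X₁ ω) * Smat i j)
    (A₁ : Set (Fin p₁ → ℝ)) (hA₁ : MeasurableSet A₁)
    (Ev : Set Ω) (hEv : Ev = X₁ ⁻¹' A₁) (hPEv : P Ev ≠ 0)
    (ξ : Fin p₁ → ℝ) (hξ : ∀ r, ξ r = (P Ev).toReal⁻¹ * ∫ ω in Ev, X₁ ω r ∂P)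
    (ζ : Fin p₂ → ℝ) (hζ : ∀ i, ζ i = (P Ev).toReal⁻¹ * ∫ ω in Ev, X₂ ω i ∂P)
    (Om : Matrix (Fin p₁) (Fin p₁) ℝ)
    (hOm : ∀ r s, Om r s = (P Ev).toReal⁻¹ * ∫ ω in Ev, X₁ ω r * X₁ ω s ∂P - ξ r * ξ s)
    (w : ℝ) (hw : w = (P Ev).toReal⁻¹ * ∫ ω in Ev, h (X₁ ω) ∂P) :
    (∀ r j, (P Ev).toReal⁻¹ * ∫ ω in Ev, X₁ ω r * X₂ ω j ∂P - ξ r * ζ j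
        = (Om * Bᵀ) r j) ∧
    (∀ i j, (P Ev).toReal⁻¹ * ∫ ω in Ev, X₂ ω i * X₂ ω j ∂P - ζ i * ζ j
        = (B * Om * Bᵀ + w • Smat) i j) := by
  have hX₁L2 (r : Fin p₁) : MemLp (fun ω => X₁ ω r) 2 P :=
    memLp_two_of_integrable_mul_self (hX₁.eval (a := r)).aestronglyMeasurable (hint₁₁ r r)
  have hX₂L2 (j : Fin p₂) : MemLp (fun ω => X₂ ω j) 2 P :=
    memLp_two_of_integrable_mul_self (hX₂.eval (a := j)).aestronglyMeasurable (hint₂₂ j j)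
  obtain ⟨hX₁X₂, hX₂X₂⟩ := crossCovMatrix_cond_of_condExp_eq_affine hX₁.comap_le
    (comap_measurable X₁) hX₁L2 hX₂L2 hcondmean hcondcov (hEv ▸ ⟨A₁, hA₁, rfl⟩) hPEv
  have hOmcov : Om = crossCovMatrix X₁ X₁ P[|Ev] := by
    ext r s
    rw [hOm, hξ, hξ, crossCovMatrix_apply, covariance_cond_eq_sub (hX₁L2 r) (hX₁L2 s) hPEv]
  refine ⟨fun r j => ?_, fun i j => ?_⟩
  · rw [hξ, hζ, ← covariance_cond_eq_sub (hX₁L2 r) (hX₂L2 j) hPEv, ← crossCovMatrix_apply,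
      hX₁X₂, hOmcov]
  · rw [hζ, hζ, ← covariance_cond_eq_sub (hX₂L2 i) (hX₂L2 j) hPEv, ← crossCovMatrix_apply,
      hX₂X₂, hOmcov, hw, integral_cond_eq_inv_mul_setIntegral]

/-- Law of total covariance under truncation: if `E(X₂|X₁) = μ₂ + B X₁` a.s. and
`Cov(X₂|X₁) = h(X₁) • S` a.s., then for an event `Ev = {X₁ ∈ A₁}` of positive
probability, with `Ω₁₁ = Cov(X₁|Ev)` and `w = E(h(X₁)|Ev)`, one has
`Cov(X₁, X₂|Ev) = Ω₁₁ Bᵀ` and `Cov(X₂|Ev) = B Ω₁₁ Bᵀ + w S`. -/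
theorem stmt_10 {Ω : Type*} [m0 : MeasurableSpace Ω] (P : Measure Ω)
    [IsProbabilityMeasure P] {p₁ p₂ : ℕ}
    (X₁ : Ω → (Fin p₁ → ℝ)) (X₂ : Ω → (Fin p₂ → ℝ))
    (hX₁ : Measurable X₁) (hX₂ : Measurable X₂)
    (hint₁ : Integrable X₁ P) (hint₂ : Integrable X₂ P)
    (hint₁₁ : ∀ r s, Integrable (fun ω => X₁ ω r * X₁ ω s) P)
    (hint₁₂ : ∀ r j, Integrable (fun ω => X₁ ω r * X₂ ω j) P)
    (hint₂₂ : ∀ i j, Integrable (fun ω => X₂ ω i * X₂ ω j) P)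
    (μ₂ : Fin p₂ → ℝ) (B : Matrix (Fin p₂) (Fin p₁) ℝ)
    (Smat : Matrix (Fin p₂) (Fin p₂) ℝ)
    (h : (Fin p₁ → ℝ) → ℝ) (hh : ∀ x, 0 ≤ h x) (hhm : Measurable h)
    (hinth : Integrable (fun ω => h (X₁ ω)) P)
    (hcondmean : P[X₂ | MeasurableSpace.comap X₁ inferInstance]
        =ᵐ[P] fun ω => μ₂ + B *ᵥ X₁ ω)
    (hcondcov : ∀ i j,
      P[(fun ω => (X₂ ω i - (μ₂ + B *ᵥ X₁ ω) i) * (X₂ ω j - (μ₂ + B *ᵥ X₁ ω) j)) |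
          MeasurableSpace.comap X₁ inferInstance]
        =ᵐ[P] fun ω => h (X₁ ω) * Smat i j)
    (A₁ : Set (Fin p₁ → ℝ)) (hA₁ : MeasurableSet A₁)
    (Ev : Set Ω) (hEv : Ev = X₁ ⁻¹' A₁) (hPEv : P Ev ≠ 0)
    (ξ : Fin p₁ → ℝ) (hξ : ∀ r, ξ r = (P Ev).toReal⁻¹ * ∫ ω in Ev, X₁ ω r ∂P)
    (ζ : Fin p₂ → ℝ) (hζ : ∀ i, ζ i = (P Ev).toReal⁻¹ * ∫ ω in Ev, X₂ ω i ∂P)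
    (Om : Matrix (Fin p₁) (Fin p₁) ℝ)
    (hOm : ∀ r s, Om r s = (P Ev).toReal⁻¹ * ∫ ω in Ev, X₁ ω r * X₁ ω s ∂P - ξ r * ξ s)
    (w : ℝ) (hw : w = (P Ev).toReal⁻¹ * ∫ ω in Ev, h (X₁ ω) ∂P) :
    (∀ r j, (P Ev).toReal⁻¹ * ∫ ω in Ev, X₁ ω r * X₂ ω j ∂P - ξ r * ζ j
        = (Om * Bᵀ) r j) ∧
    (∀ i j, (P Ev).toReal⁻¹ * ∫ ω in Ev, X₂ ω i * X₂ ω j ∂P - ζ i * ζ j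
        = (B * Om * Bᵀ + w • Smat) i j) :=
  stmt_10_general (m0 := m0) P X₁ X₂ hX₁ hX₂ hint₁₁ hint₂₂ μ₂ B Smat h hcondmean hcondcov A₁ hA₁ Ev
    hEv hPEv ξ hξ ζ hζ Om hOm w hw
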